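/- Let A ∈ G(d,k) with adapted orthonormal basis a₁,…,a_d (A = Lin{a₁,…,a_k}), and let ξ_i ∈ T_i A and ξ_j ∈ T_j A be elements of the standard orthonormal bases ⋀_{l∈I} a_l of T_i A and ⋀_{l∈J} a_l of T_j A with I ≠ J. Then ∫_{G₀(d,k)} ⟨A,V⟩² ⟨V,ξ_i⟩ ⟨V,ξ_j⟩ dν̄(V) = 0, where ν̄ is the invariant probability measure on the oriented Grassmannian G₀(d,k). -/

import Mathlib

/-!
Choose `l ∈ I \ J` and let `ρ` be the reflection in the hyperplane `a_lᗮ`. By Cauchy–Binet,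
`⟪u₁ ∧ … ∧ u_k, v₁ ∧ … ∧ v_k⟫ = det ⟪u_i, v_j⟫`, so `ρ` may be moved from `V` onto the basis
k-vector `⋀_{m∈S} a_m`, where it acts by `-1` if `l ∈ S` and by `1` otherwise. Hence replacing
`V` by `ρ V` keeps `⟪A,V⟫²` and `⟪V,ξ_J⟫` but flips the sign of `⟪V,ξ_I⟫`: the integrand is odd
under a map preserving the measure, and its integral vanishes.
-/

open scoped RealInnerProductSpace
open MeasureTheory

/-- The space `⋀_k ℝ^d` of `k`-vectors, in coordinates over `k`-subsets of `{1,…,d}`. -/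
abbrev ExtPow (d k : ℕ) := EuclideanSpace ℝ {s : Finset (Fin d) // s.card = k}

/-- The simple `k`-vector `u₁ ∧ … ∧ u_k` in the coordinate model. -/
noncomputable def simpleWedge {d k : ℕ} (u : Fin k → EuclideanSpace ℝ (Fin d)) :
    ExtPow d k :=
  WithLp.toLp 2 fun s : {s : Finset (Fin d) // s.card = k} =>
    Matrix.det (Matrix.of fun i j : Fin k => u i (s.1.orderIsoOfFin s.2 j))

/-- Orthonormal `k`-frames in `ℝ^d`; `u ↦ simpleWedge u` maps an invariant probability
measure on frames onto the invariant probability measure `ν̄` of the oriented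
Grassmannian `G₀(d,k)` of unit simple `k`-vectors. -/
abbrev Stiefel (d k : ℕ) := {u : Fin k → EuclideanSpace ℝ (Fin d) // Orthonormal ℝ u}

open Finset Function Equiv
open scoped Matrix

theorem Finset.range_coe_orderIsoOfFin {α : Type*} [LinearOrder α] (s : Finset α) {k : ℕ}
    (h : s.card = k) : Set.range (fun j => (s.orderIsoOfFin h j : α)) = s := by
  simp [coe_orderIsoOfFin_apply]

theorem Finset.prod_ite_eq_neg_one_of_injective {ι κ : Type*} [Fintype ι] [DecidableEq κ]
    {c : ι → κ} (hc : Injective c) (l : κ) :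
    ∏ t, (if c t = l then (-1 : ℝ) else 1) = if l ∈ Set.range c then -1 else 1 := by
  split_ifs with hl
  · obtain ⟨t₀, rfl⟩ := hl
    rw [prod_eq_single t₀ (fun t _ ht => if_neg (hc.ne ht)) (by simp), if_pos rfl]
  · exact prod_eq_one fun t _ => if_neg fun h => hl ⟨t, h⟩

section CauchyBinet

variable {R ι : Type*} [CommRing R] [Fintype ι] {k : ℕ}

theorem Fintype.sum_eq_sum_orderIsoOfFin_comp_perm [LinearOrder ι] {M : Type*}
    [AddCommMonoid M] (F : (Fin k → ι) → M) (hF : ∀ φ, ¬ Injective φ → F φ = 0) :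
    ∑ φ, F φ = ∑ s : {s : Finset ι // s.card = k}, ∑ σ : Perm (Fin k),
      F fun j => s.1.orderIsoOfFin s.2 (σ j) := by
  rw [← Fintype.sum_prod_type']
  symm
  refine Fintype.sum_of_injective (fun (p : {s : Finset ι // s.card = k} × Perm (Fin k)) j =>
    (p.1.1.orderIsoOfFin p.1.2 (p.2 j) : ι)) ?_ _ _ ?_ fun _ => rfl
  · rintro ⟨s, σ⟩ ⟨s', σ'⟩ h
    have hrange : ∀ (t : {s : Finset ι // s.card = k}) (τ : Perm (Fin k)),
        Set.range (fun j => (t.1.orderIsoOfFin t.2 (τ j) : ι)) = t.1 := fun t τ =>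
      (EquivLike.range_comp (fun j => (t.1.orderIsoOfFin t.2 j : ι)) τ).trans
        (range_coe_orderIsoOfFin t.1 t.2)
    have hs : s = s' := Subtype.ext (coe_injective
      ((hrange s σ).symm.trans ((congrArg Set.range h).trans (hrange s' σ'))))
    subst hs
    simp only [Prod.mk.injEq, true_and]
    exact Equiv.ext fun j => (s.1.orderIsoOfFin s.2).injective (Subtype.ext (congrFun h j))
  · intro φ hφ
    by_contra hF0
    have hinj : Injective φ := by_contra fun h => hF0 (hF φ h)
    have hcard : (univ.image φ).card = k := by
      rw [card_image_of_injective _ hinj, card_univ, Fintype.card_fin]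
    set e := (univ.image φ).orderIsoOfFin hcard
    have hmem : ∀ t, φ t ∈ univ.image φ := fun t => mem_image_of_mem φ (mem_univ t)
    have hσ : Injective fun t => e.symm ⟨φ t, hmem t⟩ :=
      fun x y hxy => hinj (congrArg Subtype.val (e.symm.injective hxy))
    exact hφ ⟨(⟨_, hcard⟩, Equiv.ofBijective _ (Finite.injective_iff_bijective.mp hσ)),
      funext fun t => congrArg Subtype.val (e.apply_symm_apply ⟨φ t, hmem t⟩)⟩

namespace Matrix

theorem det_mul_transpose_eq_sum_prod_mul_det_submatrix (V U : Matrix (Fin k) ι R) :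
    (V * Uᵀ).det = ∑ φ : Fin k → ι, (∏ i, V i (φ i)) * (U.submatrix id φ).det := by
  have hrows : V * Uᵀ = of fun i => ∑ c, V i c • Uᵀ c := by
    ext i t
    simp [mul_apply]
  rw [hrows]
  change detRowAlternating (fun i => ∑ c, V i c • Uᵀ c) = _
  rw [← AlternatingMap.coe_multilinearMap, MultilinearMap.map_sum]
  refine sum_congr rfl fun φ _ => ?_
  rw [MultilinearMap.map_smul_univ, smul_eq_mul, ← det_transpose]
  rfl

/-- The Cauchy–Binet formula. -/
theorem det_mul_transpose_eq_sum_det_submatrix [LinearOrder ι] (V U : Matrix (Fin k) ι R) :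
    (V * Uᵀ).det = ∑ s : {s : Finset ι // s.card = k},
      (V.submatrix id fun j => (s.1.orderIsoOfFin s.2 j : ι)).det *
        (U.submatrix id fun j => (s.1.orderIsoOfFin s.2 j : ι)).det := by
  rw [det_mul_transpose_eq_sum_prod_mul_det_submatrix,
    Fintype.sum_eq_sum_orderIsoOfFin_comp_perm _ fun φ hφ => by
      obtain ⟨i, j, hij, hne⟩ := not_injective_iff.mp hφ
      rw [det_zero_of_column_eq hne fun r => by simp [hij], mul_zero]]
  refine sum_congr rfl fun s _ => ?_
  set e : Fin k → ι := fun j => (s.1.orderIsoOfFin s.2 j : ι)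
  calc ∑ σ : Perm (Fin k), (∏ i, V i (e (σ i))) * (U.submatrix id (e ∘ σ)).det
      = ∑ σ : Perm (Fin k), Perm.sign σ * (∏ i, V i (e (σ i))) * (U.submatrix id e).det := by
        refine sum_congr rfl fun σ _ => ?_
        rw [show U.submatrix id (e ∘ σ) = (U.submatrix id e).submatrix id σ from rfl,
          det_permute']
        ring
    _ = (V.submatrix id e).det * (U.submatrix id e).det := by
        rw [← sum_mul, ← det_transpose (V.submatrix id e), det_apply' (V.submatrix id e)ᵀ]
        rfl

end Matrix

end CauchyBinet

theorem Orthonormal.reflection_orthogonal_span_singleton_apply {𝕜 E ι : Type*} [RCLike 𝕜]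
    [NormedAddCommGroup E] [InnerProductSpace 𝕜 E] [DecidableEq ι] {a : ι → E}
    (ha : Orthonormal 𝕜 a) (l m : ι) :
    (𝕜 ∙ a l)ᗮ.reflection (a m) = (if m = l then -1 else 1 : 𝕜) • a m := by
  split_ifs with hml
  · rw [hml, neg_one_smul, Submodule.reflection_orthogonalComplement_singleton_eq_neg]
  · rw [one_smul, Submodule.reflection_mem_subspace_eq_self]
    rw [Submodule.mem_orthogonal_singleton_iff_inner_right]
    exact ha.2 (Ne.symm hml)

theorem MeasureTheory.integral_eq_zero_of_map_eq_of_comp_eq_neg {α : Type*} [MeasurableSpace α]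
    {μ : Measure α} {f : α → α} {g : α → ℝ} (hf : Measurable f) (hμf : μ.map f = μ)
    (hg : AEStronglyMeasurable g μ) (hgf : ∀ x, g (f x) = -g x) : ∫ x, g x ∂μ = 0 := by
  have hneg : ∫ x, g x ∂μ = -∫ x, g x ∂μ := by
    conv_lhs => rw [← hμf]
    rw [integral_map hf.aemeasurable (by rwa [hμf])]
    simp only [hgf, integral_neg]
  exact self_eq_neg.mp hneg

section simpleWedge

variable {d k : ℕ}

@[fun_prop]
theorem continuous_simpleWedge :
    Continuous (simpleWedge : (Fin k → EuclideanSpace ℝ (Fin d)) → ExtPow d k) := by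
  unfold simpleWedge
  fun_prop

theorem inner_simpleWedge (v u : Fin k → EuclideanSpace ℝ (Fin d)) :
    ⟪simpleWedge v, simpleWedge u⟫ = (Matrix.of fun i t => ⟪v i, u t⟫).det := by
  have hgram : (Matrix.of fun i t => ⟪v i, u t⟫)
      = (Matrix.of fun i c => v i c) * (Matrix.of fun t c => u t c)ᵀ := by
    ext i t
    simp [Matrix.mul_apply, PiLp.inner_apply, mul_comm]
  rw [hgram, Matrix.det_mul_transpose_eq_sum_det_submatrix, PiLp.inner_apply]
  refine sum_congr rfl fun s _ => ?_
  simp only [RCLike.inner_apply, conj_trivial, mul_comm]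
  rfl

theorem simpleWedge_smul (c : Fin k → ℝ) (u : Fin k → EuclideanSpace ℝ (Fin d)) :
    simpleWedge (fun t => c t • u t) = (∏ t, c t) • simpleWedge u := by
  ext s
  simp only [simpleWedge, PiLp.smul_apply, smul_eq_mul]
  exact Matrix.det_mul_column _ _

theorem inner_simpleWedge_linearIsometryEquiv_comp
    (ρ : EuclideanSpace ℝ (Fin d) ≃ₗᵢ[ℝ] EuclideanSpace ℝ (Fin d))
    (u v : Fin k → EuclideanSpace ℝ (Fin d)) :
    ⟪simpleWedge (fun t => ρ (u t)), simpleWedge v⟫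
      = ⟪simpleWedge u, simpleWedge (fun t => ρ.symm (v t))⟫ := by
  simp only [inner_simpleWedge, LinearIsometryEquiv.inner_map_eq_flip]

theorem inner_simpleWedge_reflection_comp {a : Fin d → EuclideanSpace ℝ (Fin d)}
    (ha : Orthonormal ℝ a) (l : Fin d) (u : Fin k → EuclideanSpace ℝ (Fin d))
    {c : Fin k → Fin d} (hc : Injective c) :
    ⟪simpleWedge (fun t => (ℝ ∙ a l)ᗮ.reflection (u t)), simpleWedge (fun t => a (c t))⟫
      = (if l ∈ Set.range c then -1 else 1) *
          ⟪simpleWedge u, simpleWedge (fun t => a (c t))⟫ := by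
  rw [inner_simpleWedge_linearIsometryEquiv_comp, Submodule.reflection_symm]
  simp only [ha.reflection_orthogonal_span_singleton_apply]
  rw [simpleWedge_smul, inner_smul_right, prod_ite_eq_neg_one_of_injective hc]

noncomputable def Stiefel.map (ρ : EuclideanSpace ℝ (Fin d) ≃ₗᵢ[ℝ] EuclideanSpace ℝ (Fin d)) :
    Stiefel d k → Stiefel d k :=
  fun u => ⟨fun t => ρ (u.1 t), u.2.comp_linearIsometryEquiv ρ⟩

theorem Stiefel.measurable_map (ρ : EuclideanSpace ℝ (Fin d) ≃ₗᵢ[ℝ] EuclideanSpace ℝ (Fin d)) :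
    Measurable (Stiefel.map (k := k) ρ) := by
  refine Measurable.subtype_mk (measurable_pi_lambda _ fun t => ?_)
  exact ρ.continuous.measurable.comp ((measurable_pi_apply t).comp measurable_subtype_coe)

end simpleWedge

theorem integral_inner_sq_mul_inner_basis_eq_zero_general (d k : ℕ) (hk : k ≤ d)
    (μ : Measure (Stiefel d k))
    (hinv : ∀ ρ : EuclideanSpace ℝ (Fin d) ≃ₗᵢ[ℝ] EuclideanSpace ℝ (Fin d),
      ∀ f : Stiefel d k → Stiefel d k,
        (∀ u t, (f u).1 t = ρ (u.1 t)) → Measure.map f μ = μ)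
    (a : Fin d → EuclideanSpace ℝ (Fin d)) (ha : Orthonormal ℝ a)
    (I J : Finset (Fin d)) (hI : I.card = k) (hJ : J.card = k)
    (hIJ : I ≠ J) :
    ∫ u : Stiefel d k,
        ⟪simpleWedge (fun t : Fin k => a (Fin.castLE hk t)), simpleWedge u.1⟫ ^ 2 *
          (⟪simpleWedge u.1, simpleWedge (fun t => a (I.orderIsoOfFin hI t))⟫ *
           ⟪simpleWedge u.1, simpleWedge (fun t => a (J.orderIsoOfFin hJ t))⟫) ∂μ = 0 := by
  obtain ⟨l, hlI, hlJ⟩ : ∃ l ∈ I, l ∉ J := by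
    by_contra! h
    exact hIJ (eq_of_subset_of_card_le h (hJ.trans hI.symm).le)
  set ρ := (ℝ ∙ a l)ᗮ.reflection
  have hinj : ∀ (S : Finset (Fin d)) (hS : S.card = k),
      Injective fun t => (S.orderIsoOfFin hS t : Fin d) :=
    fun S hS => Subtype.val_injective.comp (S.orderIsoOfFin hS).injective
  refine integral_eq_zero_of_map_eq_of_comp_eq_neg (Stiefel.measurable_map ρ)
    (hinv ρ _ fun _ _ => rfl) (Continuous.aestronglyMeasurable (by fun_prop)) fun u => ?_
  simp only [Stiefel.map]
  rw [real_inner_comm (simpleWedge fun t => ρ (u.1 t)), real_inner_comm (simpleWedge u.1),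
    inner_simpleWedge_reflection_comp ha l _ (Fin.castLE_injective hk),
    inner_simpleWedge_reflection_comp ha l _ (hinj I hI),
    inner_simpleWedge_reflection_comp ha l _ (hinj J hJ)]
  simp only [range_coe_orderIsoOfFin, mem_coe, hlI, hlJ, if_true, if_false]
  split_ifs <;> ring

/-- Claim 1: let `a₁,…,a_d` be an orthonormal basis adapted to `A = Lin{a₁,…,a_k}`, and
let `ξ_I = ⋀_{l∈I} a_l ∈ T_i A`, `ξ_J = ⋀_{l∈J} a_l ∈ T_j A` be members of the standard
orthonormal bases of `T_i A`, `T_j A` (so `|I| = |J| = k`, `|I ∩ {1,…,k}| = k−i`,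
`|J ∩ {1,…,k}| = k−j`) with `I ≠ J`.  Then
`∫_{G₀(d,k)} ⟨A,V⟩² ⟨V,ξ_I⟩ ⟨V,ξ_J⟩ dν̄(V) = 0`. -/
theorem integral_inner_sq_mul_inner_basis_eq_zero (d k i j : ℕ) (hk : k ≤ d)
    (μ : Measure (Stiefel d k)) (hμ : IsProbabilityMeasure μ)
    (hinv : ∀ ρ : EuclideanSpace ℝ (Fin d) ≃ₗᵢ[ℝ] EuclideanSpace ℝ (Fin d),
      ∀ f : Stiefel d k → Stiefel d k,
        (∀ u t, (f u).1 t = ρ (u.1 t)) → Measure.map f μ = μ)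
    (a : Fin d → EuclideanSpace ℝ (Fin d)) (ha : Orthonormal ℝ a)
    (I J : Finset (Fin d)) (hI : I.card = k) (hJ : J.card = k)
    (hIi : (I ∩ Finset.filter (fun t : Fin d => (t : ℕ) < k) Finset.univ).card = k - i)
    (hJj : (J ∩ Finset.filter (fun t : Fin d => (t : ℕ) < k) Finset.univ).card = k - j)
    (hIJ : I ≠ J) :
    ∫ u : Stiefel d k,
        ⟪simpleWedge (fun t : Fin k => a (Fin.castLE hk t)), simpleWedge u.1⟫ ^ 2 *
          (⟪simpleWedge u.1, simpleWedge (fun t => a (I.orderIsoOfFin hI t))⟫ *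
           ⟪simpleWedge u.1, simpleWedge (fun t => a (J.orderIsoOfFin hJ t))⟫) ∂μ = 0 :=
  integral_inner_sq_mul_inner_basis_eq_zero_general d k hk μ hinv a ha I J hI hJ hIJ
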